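/- arXiv:1910.06818 — 4 statements merged into one kernel-verified Lean document; each statement's English description precedes it below -/
import Mathlib

section
/- (Semantic form of Theorem 1, decomposition of a phase gadget into phased AND-gates.) Let n ≥ 2, α ∈ ℝ, and let x : Fin n → ℤ with x i ∈ {0,1} for all i. Let p(x) ∈ {0,1} be the parity of x (the iterated XOR x₁ ⊕ ⋯ ⊕ xₙ). Then Complex.exp(-I·(α/2)·p(x)) = (∏_{i} Complex.exp(-I·(α/2)·x i)) · (∏_{S ⊆ Fin n, |S| ≥ 2} Complex.exp(I·(-1)^{|S|}·2^{|S|-2}·α·∏_{i∈S} x i)). In particular, the phase coefficients α_k = (-1)^k 2^{k-2} α attached to the k-AND gates satisfy α_{k+1} = -2 α_k. -/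
open Finset Complex

/-- semantic form of the phase-gadget decomposition theorem:
for `n ≥ 2`, `α ∈ ℝ` and bits `x : Fin n → ℤ`, with `p(x)` the parity of `x`,
`exp(-I(α/2)p(x)) = (∏ i, exp(-I(α/2) x i)) ·
  ∏_{S ⊆ Fin n, |S| ≥ 2} exp(I·(-1)^|S|·2^(|S|-2)·α·∏_{i∈S} x i)`. -/
theorem phase_gadget_decomposition (n : ℕ) (hn : 2 ≤ n) (α : ℝ) (x : Fin n → ℤ)
    (hx : ∀ i, x i = 0 ∨ x i = 1) :
    Complex.exp (-Complex.I * (α / 2) *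
        (if Odd ((Finset.univ.filter (fun i => x i = 1)).card) then (1 : ℂ) else 0)) =
      (∏ i, Complex.exp (-Complex.I * (α / 2) * (x i : ℂ))) *
        ∏ S ∈ Finset.univ.powerset.filter (fun S : Finset (Fin n) => 2 ≤ S.card),
          Complex.exp (Complex.I * ((-1 : ℂ) ^ S.card * (2 : ℂ) ^ (S.card - 2) * (α : ℂ) *
            ∏ i ∈ S, (x i : ℂ))) := by
  classical
  set T : Finset (Fin n) := Finset.univ.filter (fun i => x i = 1) with hT
  set m := T.card with hm
  have hxc : ∀ i, (x i : ℂ) = if i ∈ T then 1 else 0 := by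
    intro i
    rcases hx i with h | h <;> simp [hT, h]
  have hprod : ∀ S : Finset (Fin n), (∏ i ∈ S, (x i : ℂ)) = if S ⊆ T then 1 else 0 := by
    intro S
    by_cases hS : S ⊆ T
    · rw [if_pos hS]
      apply Finset.prod_eq_one
      intro i hi
      rw [hxc i, if_pos (hS hi)]
    · rw [if_neg hS]
      obtain ⟨i, hiS, hiT⟩ := Finset.not_subset.mp hS
      apply Finset.prod_eq_zero hiS
      rw [hxc i, if_neg hiT]
  have hsum : (∑ i, (x i : ℂ)) = (m : ℂ) := by
    rw [Finset.sum_congr rfl (fun i _ => hxc i)]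
    simp [hm]
  -- key combinatorial identity
  have h1 : ∑ S ∈ T.powerset, ((-2:ℂ))^S.card = (-1:ℂ)^m := by
    calc ∑ S ∈ T.powerset, ((-2:ℂ))^S.card
        = ∑ S ∈ T.powerset, (∏ _i ∈ S, (-2:ℂ)) * ∏ _i ∈ T \ S, (1:ℂ) := by
          simp [Finset.prod_const]
      _ = ∏ _i ∈ T, ((-2:ℂ) + 1) := (Finset.prod_add _ _ T).symm
      _ = (-1:ℂ)^m := by norm_num [Finset.prod_const, hm]
  have h2 : ∑ S ∈ T.powerset.filter (fun S => ¬ 2 ≤ S.card), ((-2:ℂ))^S.card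
      = 1 - 2*m := by
    have hset : T.powerset.filter (fun S => ¬ 2 ≤ S.card)
        = insert (∅ : Finset (Fin n)) (T.image fun i => {i}) := by
      ext S
      simp only [Finset.mem_filter, Finset.mem_powerset, Finset.mem_insert,
        Finset.mem_image, not_le]
      constructor
      · rintro ⟨hsub, hcard⟩
        have hcard' : S.card = 0 ∨ S.card = 1 := by omega
        rcases hcard' with h | h
        · left; exact Finset.card_eq_zero.mp h
        · obtain ⟨i, hi⟩ := Finset.card_eq_one.mp h
          right; exact ⟨i, hsub (hi ▸ Finset.mem_singleton_self i), hi.symm⟩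
      · rintro (rfl | ⟨i, hi, rfl⟩)
        · simp
        · exact ⟨Finset.singleton_subset_iff.mpr hi, by simp⟩
    rw [hset, Finset.sum_insert (by simp), Finset.sum_image (by simp)]
    simp [Finset.sum_const, hm]
    ring
  have h3 : ∑ S ∈ T.powerset.filter (fun S => 2 ≤ S.card), ((-2:ℂ))^S.card
      = (-1:ℂ)^m - 1 + 2*m := by
    have := Finset.sum_filter_add_sum_filter_not T.powerset (fun S => 2 ≤ S.card)
      (fun S => ((-2:ℂ))^S.card)
    rw [h2] at this
    rw [h1] at this
    linear_combination this
  have key : (4:ℂ) * ∑ S ∈ T.powerset.filter (fun S => 2 ≤ S.card),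
      ((-1:ℂ)^S.card * 2^(S.card-2)) = (-1:ℂ)^m - 1 + 2*m := by
    rw [Finset.mul_sum, ← h3]
    apply Finset.sum_congr rfl
    intro S hS
    have hc : 2 ≤ S.card := (Finset.mem_filter.mp hS).2
    have h2k : (2:ℂ)^S.card = 2^(S.card - 2) * 4 := by
      have : S.card = S.card - 2 + 2 := (Nat.sub_add_cancel hc).symm
      rw [this, pow_add]
      norm_num
    rw [neg_pow (2:ℂ) S.card, h2k]
    ring
  -- convert products of exponentials to an exponential of a sum
  rw [← Complex.exp_sum, ← Complex.exp_sum, ← Complex.exp_add]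
  refine congrArg Complex.exp ?_
  -- rewrite the gadget sum
  have hgadget : ∑ S ∈ Finset.univ.powerset.filter (fun S : Finset (Fin n) => 2 ≤ S.card),
      Complex.I * ((-1 : ℂ) ^ S.card * (2 : ℂ) ^ (S.card - 2) * (α : ℂ) *
        ∏ i ∈ S, (x i : ℂ))
      = Complex.I * (α : ℂ) * ∑ S ∈ T.powerset.filter (fun S => 2 ≤ S.card),
          ((-1:ℂ)^S.card * 2^(S.card-2)) := by
    have step1 : ∀ S ∈ Finset.univ.powerset.filter (fun S : Finset (Fin n) => 2 ≤ S.card),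
        Complex.I * ((-1 : ℂ) ^ S.card * (2 : ℂ) ^ (S.card - 2) * (α : ℂ) *
          ∏ i ∈ S, (x i : ℂ))
        = if S ⊆ T then Complex.I * (α : ℂ) * ((-1:ℂ)^S.card * 2^(S.card-2)) else 0 := by
      intro S _
      rw [hprod S]
      split_ifs <;> ring
    rw [Finset.sum_congr rfl step1, Finset.sum_ite, Finset.sum_const_zero, add_zero,
      ← Finset.mul_sum]
    congr 2
    ext S
    simp [Finset.mem_filter, Finset.mem_powerset, Finset.subset_univ, and_comm]
  rw [hgadget, ← Finset.mul_sum, hsum]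
  -- final scalar identity
  have hfin : ∑ S ∈ T.powerset.filter (fun S => 2 ≤ S.card),
      ((-1:ℂ)^S.card * 2^(S.card-2)) = ((-1:ℂ)^m - 1 + 2*m) / 4 := by
    field_simp
    linear_combination key
  rw [hfin]
  by_cases hodd : Odd m
  · rw [if_pos hodd, (Odd.neg_one_pow hodd : ((-1:ℂ))^m = -1)]
    ring
  · rw [if_neg hodd, (Even.neg_one_pow (Nat.not_odd_iff_even.mp hodd) : ((-1:ℂ))^m = 1)]
    ring
end

section
/- (Semantic form of the Corollary: decomposition of the π/4-phase gadget.) Let n ≥ 3 and let x : Fin n → ℤ with x i ∈ {0,1} for all i. Write p(x_{i₁},…,x_{i_k}) ∈ {0,1} for the parity (iterated XOR) of the listed bits. Set σ = (n-2)(n-3)π/8 and τ = (3-n)π/4. Then Complex.exp(I·(π/4)·p(x₁,…,xₙ)) = (∏_{i} Complex.exp(I·σ·x i)) · (∏_{i < j} Complex.exp(I·τ·p(x i, x j))) · (∏_{i < j < k} Complex.exp(I·(π/4)·p(x i, x j, x k))). -/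
open Finset Real

/-- XOR of integer bits. -/
def xorZ (u v : ℤ) : ℤ := u + v - 2 * u * v

/-!
Everything depends only on the Hamming weight `w` and the number `z` of zeros: the 2-line
parities sum to `w z` and the 3-line parities to `w C(z,2) + C(w,3)` (induction, adding a largest
index). With the given angles the right-hand exponent becomes `π/8` times `2w - 4C(w,2) + 8C(w,3)`,
the left one `π/8` times `2p = 1 - (1 - 2)^w`, and these integers agree mod 16 because every term
of the binomial expansion of `(1 - 2)^w` beyond the first four is a multiple of `2^4`.
-/

theorem xorZ_zero_right (u : ℤ) : xorZ u 0 = u := by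
  simp [xorZ]

theorem xorZ_one_right (u : ℤ) : xorZ u 1 = 1 - u := by
  unfold xorZ; ring

theorem Nat.add_choose_two (a b : ℕ) : (a + b).choose 2 = a.choose 2 + a * b + b.choose 2 := by
  rw [Nat.add_choose_eq]
  simp [Finset.Nat.antidiagonal_succ]
  ring

theorem two_mul_choose_two_eq (w : ℕ) : 2 * (w.choose 2 : ℤ) = w * (w - 1) := by
  rw [← Nat.cast_descFactorial_two, Nat.descFactorial_eq_factorial_mul_choose]
  push_cast [Nat.factorial]
  ring

theorem six_mul_choose_three_eq (w : ℕ) : 6 * (w.choose 3 : ℤ) = w * (w - 1) * (w - 2) := by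
  induction w with
  | zero => simp
  | succ w ih =>
    rw [Nat.choose_succ_succ', Nat.cast_add]
    push_cast
    linear_combination ih + 3 * two_mul_choose_two_eq w

theorem sixteen_dvd_two_mul_parity_sub (w : ℕ) :
    (16 : ℤ) ∣ 2 * (if Odd w then 1 else 0) - (2 * w - 4 * w.choose 2 + 8 * w.choose 3) := by
  have hparity : 2 * (if Odd w then 1 else 0 : ℤ) = 1 - (-1) ^ w := by
    rcases Nat.even_or_odd w with h | h
    · simp [h.neg_one_pow, Nat.not_odd_iff_even.mpr h]
    · simp [h.neg_one_pow, h]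
  have hbinom : (-1 : ℤ) ^ w = ∑ k ∈ range (4 + w), (-2 : ℤ) ^ k * w.choose k := by
    rw [show (-1 : ℤ) = -2 + 1 by norm_num, add_pow]
    -- pad the expansion to at least four terms; the added binomials vanish
    refine sum_subset (fun k hk => ?_) (fun k _ hk => ?_) |>.trans (sum_congr rfl fun k _ => ?_)
    · simp only [mem_range] at hk ⊢
      omega
    · simp only [mem_range, not_lt] at hk
      simp [Nat.choose_eq_zero_of_lt hk]
    · simp
  obtain ⟨c, hc⟩ : (16 : ℤ) ∣ ∑ k ∈ range w, (-2 : ℤ) ^ (4 + k) * w.choose (4 + k) :=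
    dvd_sum fun k _ => (pow_add (-2 : ℤ) 4 k ▸ dvd_mul_right _ _).mul_right _
  simp only [hparity, hbinom, sum_range_add, sum_range_succ, sum_range_zero,
    Nat.choose_zero_right, Nat.choose_one_right, Nat.cast_one]
  exact ⟨-c, by linear_combination -hc⟩

section OrderedTuples

variable {α : Type*} [LinearOrder α] {a : α} {s : Finset α}

def pairsOf (s : Finset α) : Finset (α × α) := (s ×ˢ s).filter fun p => p.1 < p.2

def triplesOf (s : Finset α) : Finset (α × α × α) :=
  (s ×ˢ s ×ˢ s).filter fun t => t.1 < t.2.1 ∧ t.2.1 < t.2.2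

theorem pairsOf_insert (hmax : ∀ i ∈ s, i < a) :
    pairsOf (insert a s) = pairsOf s ∪ s.image (·, a) := by
  ext ⟨u, v⟩
  simp only [pairsOf, mem_filter, mem_product, mem_insert, mem_union, mem_image, Prod.mk.injEq]
  have := hmax u; have := hmax v
  grind

theorem triplesOf_insert (hmax : ∀ i ∈ s, i < a) :
    triplesOf (insert a s) = triplesOf s ∪ (pairsOf s).image fun p => (p.1, p.2, a) := by
  ext ⟨u, v, w⟩
  simp only [triplesOf, pairsOf, mem_filter, mem_product, mem_insert, mem_union, mem_image,
    Prod.mk.injEq, Prod.exists]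
  have := hmax u; have := hmax v; have := hmax w
  grind

variable {M : Type*} [AddCommMonoid M]

theorem sum_pairsOf_insert (hmax : ∀ i ∈ s, i < a) (f : α × α → M) :
    ∑ p ∈ pairsOf (insert a s), f p = ∑ p ∈ pairsOf s, f p + ∑ i ∈ s, f (i, a) := by
  rw [pairsOf_insert hmax, sum_union, sum_image]
  · simp
  · rw [disjoint_left]
    rintro ⟨u, v⟩ huv
    simp only [pairsOf, mem_filter, mem_product, mem_image, Prod.mk.injEq] at huv ⊢
    have := hmax v
    grind

theorem sum_triplesOf_insert (hmax : ∀ i ∈ s, i < a) (f : α × α × α → M) :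
    ∑ t ∈ triplesOf (insert a s), f t =
      ∑ t ∈ triplesOf s, f t + ∑ p ∈ pairsOf s, f (p.1, p.2, a) := by
  rw [triplesOf_insert hmax, sum_union, sum_image]
  · simp
  · rw [disjoint_left]
    rintro ⟨u, v, w⟩ huvw
    simp only [triplesOf, mem_filter, mem_product, mem_image, Prod.mk.injEq,
      Prod.exists] at huvw ⊢
    have := hmax w
    grind

theorem card_pairsOf (s : Finset α) : #(pairsOf s) = (#s).choose 2 := by
  induction s using Finset.induction_on_max with
  | empty => simp [pairsOf]
  | insert a s hmax ih =>
    have := sum_pairsOf_insert hmax fun _ => 1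
    simp only [sum_const, smul_eq_mul, mul_one] at this
    rw [this, ih, card_insert_of_notMem fun h => (hmax a h).false, Nat.choose_succ_succ',
      Nat.choose_one_right, add_comm]

theorem pairsOf_univ [Fintype α] :
    pairsOf (univ : Finset α) = univ.filter fun p : α × α => p.1 < p.2 := by
  simp [pairsOf]

theorem triplesOf_univ [Fintype α] :
    triplesOf (univ : Finset α) =
      univ.filter fun t : α × α × α => t.1 < t.2.1 ∧ t.2.1 < t.2.2 := by
  simp [triplesOf]

end OrderedTuples

section Bits

variable {α : Type*} {x : α → ℤ}

theorem sum_eq_card_filter_eq_one (hx : ∀ i, x i = 0 ∨ x i = 1) (s : Finset α) :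
    ∑ i ∈ s, x i = #{i ∈ s | x i = 1} := by
  rw [card_filter]
  push_cast
  refine sum_congr rfl fun i _ => ?_
  rcases hx i with h | h <;> simp [h]

theorem card_filter_eq_one_add_card_filter_eq_zero (hx : ∀ i, x i = 0 ∨ x i = 1)
    (s : Finset α) : #{i ∈ s | x i = 1} + #{i ∈ s | x i = 0} = #s := by
  have hzero : {i ∈ s | ¬x i = 1} = {i ∈ s | x i = 0} :=
    filter_congr fun i _ => by rcases hx i with h | h <;> simp [h]
  rw [← hzero, card_filter_add_card_filter_not]

theorem card_filter_insert_of_notMem [DecidableEq α] (p : α → Prop) [DecidablePred p] {a : α}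
    {s : Finset α} (ha : a ∉ s) :
    #{i ∈ insert a s | p i} = #{i ∈ s | p i} + if p a then 1 else 0 := by
  rw [filter_insert]
  split_ifs <;> simp [ha]

variable [LinearOrder α]

theorem sum_pairsOf_xorZ (hx : ∀ i, x i = 0 ∨ x i = 1) (s : Finset α) :
    ∑ p ∈ pairsOf s, xorZ (x p.1) (x p.2) = #{i ∈ s | x i = 1} * #{i ∈ s | x i = 0} := by
  induction s using Finset.induction_on_max with
  | empty => simp [pairsOf]
  | insert a s hmax ih =>
    have ha : a ∉ s := fun h => (hmax a h).false
    rw [sum_pairsOf_insert hmax, ih]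
    rcases hx a with h | h
    · simp only [h, xorZ_zero_right, sum_eq_card_filter_eq_one hx,
        card_filter_insert_of_notMem _ ha, zero_ne_one, ↓reduceIte, add_zero, Nat.cast_add,
        Nat.cast_one]
      ring
    · simp only [h, xorZ_one_right, sum_sub_distrib, sum_const, Int.nsmul_eq_mul, mul_one,
        sum_eq_card_filter_eq_one hx, card_filter_insert_of_notMem _ ha, one_ne_zero,
        ↓reduceIte, add_zero, Nat.cast_add, Nat.cast_one,
        ← card_filter_eq_one_add_card_filter_eq_zero hx s]
      ring

theorem sum_triplesOf_xorZ (hx : ∀ i, x i = 0 ∨ x i = 1) (s : Finset α) :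
    ∑ t ∈ triplesOf s, xorZ (xorZ (x t.1) (x t.2.1)) (x t.2.2) =
      #{i ∈ s | x i = 1} * (#{i ∈ s | x i = 0}).choose 2 + (#{i ∈ s | x i = 1}).choose 3 := by
  induction s using Finset.induction_on_max with
  | empty => simp [triplesOf]
  | insert a s hmax ih =>
    have ha : a ∉ s := fun h => (hmax a h).false
    rw [sum_triplesOf_insert hmax, ih]
    rcases hx a with h | h
    · simp only [h, xorZ_zero_right, sum_pairsOf_xorZ hx, card_filter_insert_of_notMem _ ha,
        zero_ne_one, ↓reduceIte, add_zero, Nat.choose_succ_succ', Nat.choose_one_right,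
        Nat.cast_add]
      ring
    · simp only [h, xorZ_one_right, sum_sub_distrib, sum_const, Int.nsmul_eq_mul, mul_one,
        sum_pairsOf_xorZ hx, card_pairsOf, card_filter_insert_of_notMem _ ha, one_ne_zero,
        ↓reduceIte, add_zero, Nat.choose_succ_succ', Nat.cast_add, Nat.cast_one,
        ← card_filter_eq_one_add_card_filter_eq_zero hx s, Nat.add_choose_two, Nat.cast_mul]
      ring

theorem sixteen_dvd_two_mul_parity_sub_gadget_exponent (hx : ∀ i, x i = 0 ∨ x i = 1)
    (s : Finset α) :
    (16 : ℤ) ∣ 2 * (if Odd #{i ∈ s | x i = 1} then 1 else 0) -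
      (((#s : ℤ) - 2) * ((#s : ℤ) - 3) * ∑ i ∈ s, x i +
        2 * (3 - (#s : ℤ)) * ∑ p ∈ pairsOf s, xorZ (x p.1) (x p.2) +
        2 * ∑ t ∈ triplesOf s, xorZ (xorZ (x t.1) (x t.2.1)) (x t.2.2)) := by
  rw [sum_eq_card_filter_eq_one hx, sum_pairsOf_xorZ hx, sum_triplesOf_xorZ hx,
    ← card_filter_eq_one_add_card_filter_eq_zero hx s]
  set w := #{i ∈ s | x i = 1}
  set z := #{i ∈ s | x i = 0}
  obtain ⟨k, hk⟩ := sixteen_dvd_two_mul_parity_sub w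
  refine ⟨k, ?_⟩
  push_cast
  linear_combination hk - 2 * two_mul_choose_two_eq w + six_mul_choose_three_eq w -
    w * two_mul_choose_two_eq z

end Bits

theorem pi_div_four_phase_gadget_decomposition_general (n : ℕ) (x : Fin n → ℤ)
    (hx : ∀ i, x i = 0 ∨ x i = 1) :
    Complex.exp (Complex.I * (π / 4 : ℝ) *
        (if Odd ((Finset.univ.filter (fun i => x i = 1)).card) then (1 : ℂ) else 0)) =
      (∏ i, Complex.exp (Complex.I * ((((n : ℝ) - 2) * ((n : ℝ) - 3) * π / 8 : ℝ) : ℂ) *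
          (x i : ℂ))) *
      (∏ p ∈ Finset.univ.filter (fun p : Fin n × Fin n => p.1 < p.2),
          Complex.exp (Complex.I * (((3 - (n : ℝ)) * π / 4 : ℝ) : ℂ) *
            ((xorZ (x p.1) (x p.2) : ℤ) : ℂ))) *
      (∏ t ∈ Finset.univ.filter
            (fun t : Fin n × Fin n × Fin n => t.1 < t.2.1 ∧ t.2.1 < t.2.2),
          Complex.exp (Complex.I * (π / 4 : ℝ) *
            ((xorZ (xorZ (x t.1) (x t.2.1)) (x t.2.2) : ℤ) : ℂ))) := by
  obtain ⟨k, hk⟩ := sixteen_dvd_two_mul_parity_sub_gadget_exponent hx (univ : Finset (Fin n))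
  rw [pairsOf_univ, triplesOf_univ, card_univ, Fintype.card_fin] at hk
  rw [← Complex.exp_sum, ← Complex.exp_sum, ← Complex.exp_sum, ← Complex.exp_add,
    ← Complex.exp_add, Complex.exp_eq_exp_iff_exists_int]
  refine ⟨k, ?_⟩
  simp only [← mul_sum]
  have hkC := congrArg (Int.cast : ℤ → ℂ) hk
  push_cast at hkC ⊢
  linear_combination (Complex.I * π / 8) * hkC

/-- semantic form of the Corollary: decomposition of the π/4-phase gadget:
for `n ≥ 3` and bits `x : Fin n → ℤ`, with `σ = (n-2)(n-3)π/8` and `τ = (3-n)π/4`,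
`exp(I(π/4)p(x₁,…,xₙ))` equals the product of the 1-line gadgets `exp(Iσ·x i)`,
the 2-line gadgets `exp(Iτ·p(x i, x j))` over pairs `i < j`, and the 3-line gadgets
`exp(I(π/4)·p(x i, x j, x k))` over triples `i < j < k`. -/
theorem pi_div_four_phase_gadget_decomposition (n : ℕ) (hn : 3 ≤ n) (x : Fin n → ℤ)
    (hx : ∀ i, x i = 0 ∨ x i = 1) :
    Complex.exp (Complex.I * (π / 4 : ℝ) *
        (if Odd ((Finset.univ.filter (fun i => x i = 1)).card) then (1 : ℂ) else 0)) =
      (∏ i, Complex.exp (Complex.I * ((((n : ℝ) - 2) * ((n : ℝ) - 3) * π / 8 : ℝ) : ℂ) *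
          (x i : ℂ))) *
      (∏ p ∈ Finset.univ.filter (fun p : Fin n × Fin n => p.1 < p.2),
          Complex.exp (Complex.I * (((3 - (n : ℝ)) * π / 4 : ℝ) : ℂ) *
            ((xorZ (x p.1) (x p.2) : ℤ) : ℂ))) *
      (∏ t ∈ Finset.univ.filter
            (fun t : Fin n × Fin n × Fin n => t.1 < t.2.1 ∧ t.2.1 < t.2.2),
          Complex.exp (Complex.I * (π / 4 : ℝ) *
            ((xorZ (xorZ (x t.1) (x t.2.1)) (x t.2.2) : ℤ) : ℂ))) :=
  pi_div_four_phase_gadget_decomposition_general n x hx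
end

section
/- (Semantic form of transformation rule 3 of Iwama–Kambayashi–Yamashita.) Fix N ≥ 1 and generalized CNOT gates [t₁,C₁], [t₂,C₂] on Fin N (so t₁ ∉ C₁ and t₂ ∉ C₂). If t₁ ∉ C₂ and t₂ ∈ C₁, then f_{t₂,C₂} ∘ f_{t₁,C₁} = f_{t₁, (C₁ ∪ C₂) \ {t₂}} ∘ f_{t₁,C₁} ∘ f_{t₂,C₂}; i.e. the circuit [t₁,C₁]·[t₂,C₂] computes the same function as the circuit [t₂,C₂]·[t₁,C₁]·[t₁, C₁ ∪ C₂ − {t₂}]. (Note t₁ ∉ (C₁ ∪ C₂) \ {t₂}, so the third gate is well-defined.) -/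
/-- The generalized CNOT gate `[t, C]` on `N` qubits: it flips the bit at position `t`
exactly when all bits in the control set `C` are `true`, and leaves all other bits
unchanged. -/
def cnot {N : ℕ} (t : Fin N) (C : Finset (Fin N)) (x : Fin N → Bool) : Fin N → Bool :=
  fun i => if i = t then xor (x t) (decide (∀ c ∈ C, x c = true)) else x i

lemma cnot_ne {N : ℕ} (t : Fin N) (C : Finset (Fin N)) (x : Fin N → Bool) {i : Fin N}
    (h : i ≠ t) : cnot t C x i = x i := if_neg h

lemma cnot_self {N : ℕ} (t : Fin N) (C : Finset (Fin N)) (x : Fin N → Bool) :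
    cnot t C x t = xor (x t) (decide (∀ c ∈ C, x c = true)) := if_pos rfl

lemma decide_all_congr {N : ℕ} (C : Finset (Fin N)) (y z : Fin N → Bool)
    (h : ∀ c ∈ C, y c = z c) :
    decide (∀ c ∈ C, y c = true) = decide (∀ c ∈ C, z c = true) := by
  apply decide_eq_decide.mpr
  constructor <;> intro hh c hc
  · rw [← h c hc]; exact hh c hc
  · rw [h c hc]; exact hh c hc

/-- rule 3 of Iwama–Kambayashi–Yamashita: if `t₁ ∉ C₂` and `t₂ ∈ C₁`,
the circuit `[t₁,C₁]·[t₂,C₂]` computes the same function as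
`[t₂,C₂]·[t₁,C₁]·[t₁, C₁ ∪ C₂ − {t₂}]`. -/
theorem IKY_rule3 (N : ℕ) (hN : 1 ≤ N) (t₁ t₂ : Fin N) (C₁ C₂ : Finset (Fin N))
    (h₁ : t₁ ∉ C₁) (h₂ : t₂ ∉ C₂) (h₁₂ : t₁ ∉ C₂) (h₂₁ : t₂ ∈ C₁) :
    cnot t₂ C₂ ∘ cnot t₁ C₁ =
      cnot t₁ ((C₁ ∪ C₂) \ {t₂}) ∘ cnot t₁ C₁ ∘ cnot t₂ C₂ := by
  have ht : t₁ ≠ t₂ := fun h => h₁ (h ▸ h₂₁)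
  funext x i
  simp only [Function.comp_apply]
  by_cases hi1 : i = t₁
  · subst hi1
    rw [cnot_ne _ _ _ ht, cnot_self, cnot_self, cnot_self, cnot_ne _ _ _ ht]
    -- abbreviations
    have hD1 : i ∉ (C₁ ∪ C₂) \ {t₂} := by
      simp [Finset.mem_sdiff, Finset.mem_union, h₁, h₁₂]
    -- rewrite condition over D: entries are x
    have hDval : decide (∀ c ∈ (C₁ ∪ C₂) \ {t₂},
        cnot i C₁ (cnot t₂ C₂ x) c = true) = decide (∀ c ∈ (C₁ ∪ C₂) \ {t₂}, x c = true) := by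
      apply decide_all_congr
      intro c hc
      obtain ⟨hcu, hct2⟩ := Finset.mem_sdiff.mp hc
      have hc1 : c ≠ i := fun h => hD1 (h ▸ hc)
      have hc2 : c ≠ t₂ := by simpa using hct2
      rw [cnot_ne _ _ _ hc1, cnot_ne _ _ _ hc2]
    -- rewrite condition over C₁ applied to (cnot t₂ C₂ x)
    -- split C₁ at t₂
    have hsplit1 : ∀ (y : Fin N → Bool), decide (∀ c ∈ C₁, y c = true) =
        (y t₂ && decide (∀ c ∈ C₁ \ {t₂}, y c = true)) := by
      intro y
      rcases hy : y t₂ with _ | _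
      · simp only [Bool.false_and, decide_eq_false_iff_not]
        intro hh
        rw [hh t₂ h₂₁] at hy; exact absurd hy (by simp)
      · simp only [Bool.true_and]
        apply decide_eq_decide.mpr
        constructor
        · intro hh c hc; exact hh c (Finset.mem_sdiff.mp hc).1
        · intro hh c hc
          by_cases hct : c = t₂
          · rw [hct]; exact hy
          · exact hh c (Finset.mem_sdiff.mpr ⟨hc, by simpa using hct⟩)
    have hsplitD : decide (∀ c ∈ (C₁ ∪ C₂) \ {t₂}, x c = true) =
        (decide (∀ c ∈ C₁ \ {t₂}, x c = true) && decide (∀ c ∈ C₂, x c = true)) := by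
      rw [← Bool.decide_and]
      apply decide_eq_decide.mpr
      constructor
      · intro hh
        constructor
        · intro c hc
          obtain ⟨hc1, hc2⟩ := Finset.mem_sdiff.mp hc
          exact hh c (Finset.mem_sdiff.mpr ⟨Finset.mem_union_left _ hc1, hc2⟩)
        · intro c hc
          have hct : c ≠ t₂ := fun h => h₂ (h ▸ hc)
          exact hh c (Finset.mem_sdiff.mpr ⟨Finset.mem_union_right _ hc, by simpa using hct⟩)
      · rintro ⟨ha, hb⟩ c hc
        obtain ⟨hcu, hct⟩ := Finset.mem_sdiff.mp hc
        rcases Finset.mem_union.mp hcu with h | h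
        · exact ha c (Finset.mem_sdiff.mpr ⟨h, hct⟩)
        · exact hb c h
    -- condition over C₁ of (cnot t₂ C₂ x): off-t₂ entries equal x
    have hC1y : decide (∀ c ∈ C₁ \ {t₂}, cnot t₂ C₂ x c = true) =
        decide (∀ c ∈ C₁ \ {t₂}, x c = true) := by
      apply decide_all_congr
      intro c hc
      have : c ≠ t₂ := by simpa using (Finset.mem_sdiff.mp hc).2
      exact cnot_ne _ _ _ this
    rw [hDval, hsplit1 (cnot t₂ C₂ x), hsplit1 x, hsplitD, hC1y, cnot_self]
    -- pure boolean identity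
    generalize x i = a
    generalize x t₂ = b
    generalize decide (∀ c ∈ C₁ \ {t₂}, x c = true) = p
    generalize decide (∀ c ∈ C₂, x c = true) = q
    rcases a <;> rcases b <;> rcases p <;> rcases q <;> rfl
  · by_cases hi2 : i = t₂
    · subst hi2
      rw [cnot_self, cnot_ne _ _ _ hi1, cnot_ne _ _ _ hi1, cnot_ne _ _ _ hi1, cnot_self]
      congr 1
      apply decide_all_congr
      intro c hc
      have : c ≠ t₁ := fun h => h₁₂ (h ▸ hc)
      exact cnot_ne _ _ _ this
    · rw [cnot_ne _ _ _ hi2, cnot_ne _ _ _ hi1, cnot_ne _ _ _ hi1, cnot_ne _ _ _ hi1,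
          cnot_ne _ _ _ hi2]
end

section
/- (Semantic form of transformation rule 4 of Iwama–Kambayashi–Yamashita.) Fix N ≥ 1 and generalized CNOT gates [t₁,C₁], [t₂,C₂] on Fin N (so t₁ ∉ C₁ and t₂ ∉ C₂). If t₁ ∈ C₂ and t₂ ∉ C₁, then f_{t₂,C₂} ∘ f_{t₁,C₁} = f_{t₁,C₁} ∘ f_{t₂,C₂} ∘ f_{t₂, (C₁ ∪ C₂) \ {t₁}}; i.e. the circuit [t₁,C₁]·[t₂,C₂] computes the same function as the circuit [t₂, C₁ ∪ C₂ − {t₁}]·[t₂,C₂]·[t₁,C₁]. (Note t₂ ∉ (C₁ ∪ C₂) \ {t₁}, so the first gate is well-defined.) -/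
lemma ctrl_of_notMem {N : ℕ} {t : Fin N} {C : Finset (Fin N)} (D : Finset (Fin N))
    (x : Fin N → Bool) (h : t ∉ C) :
    (∀ c ∈ C, cnot t D x c = true) ↔ (∀ c ∈ C, x c = true) := by
  refine forall₂_congr fun c hc => ?_
  rw [cnot_ne t D x (fun e => h (e ▸ hc))]

/-- rule 4 of Iwama–Kambayashi–Yamashita: if `t₁ ∈ C₂` and `t₂ ∉ C₁`,
the circuit `[t₁,C₁]·[t₂,C₂]` computes the same function as
`[t₂, C₁ ∪ C₂ − {t₁}]·[t₂,C₂]·[t₁,C₁]`. -/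
theorem IKY_rule4 (N : ℕ) (hN : 1 ≤ N) (t₁ t₂ : Fin N) (C₁ C₂ : Finset (Fin N))
    (h₁ : t₁ ∉ C₁) (h₂ : t₂ ∉ C₂) (h₁₂ : t₁ ∈ C₂) (h₂₁ : t₂ ∉ C₁) :
    cnot t₂ C₂ ∘ cnot t₁ C₁ =
      cnot t₁ C₁ ∘ cnot t₂ C₂ ∘ cnot t₂ ((C₁ ∪ C₂) \ {t₁}) := by
  have ht : t₂ ≠ t₁ := fun h => h₂ (h ▸ h₁₂)
  have ht' : t₁ ≠ t₂ := ht.symm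
  funext x i
  simp only [Function.comp_apply]
  set D := (C₁ ∪ C₂) \ {t₁} with hD
  -- set notation for inner gates
  set a := decide (∀ c ∈ C₁, x c = true) with ha
  set b' := decide (∀ c ∈ C₂.erase t₁, x c = true) with hb'
  have hDset : D = C₁ ∪ C₂.erase t₁ := by
    rw [hD, Finset.sdiff_singleton_eq_erase, Finset.erase_union_distrib,
      Finset.erase_eq_of_notMem h₁]
  -- value of the innermost-gate output on C₂ and C₁
  have hinner_on : ∀ c ∈ C₂, cnot t₂ D x c = x c := fun c hc =>
    cnot_ne _ _ _ (fun e => h₂ (e ▸ hc))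
  by_cases hi1 : i = t₁
  · subst hi1
    rw [cnot_ne t₂ C₂ _ ht', cnot_self, cnot_self]
    congr 1
    · rw [cnot_ne t₂ C₂ _ ht', cnot_ne t₂ D _ ht']
    · congr 1
      rw [(ctrl_of_notMem C₂ _ h₂₁ : (∀ c ∈ C₁, cnot t₂ C₂ (cnot t₂ D x) c = true) ↔ _),
        ctrl_of_notMem D x h₂₁]
  · by_cases hi2 : i = t₂
    · rw [hi2, cnot_self, cnot_ne t₁ C₁ x ht, cnot_ne t₁ C₁ _ ht, cnot_self, cnot_self]
      have q1 : (∀ c ∈ C₂, cnot t₁ C₁ x c = true) ↔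
          ((x t₁ ^^ decide (∀ c ∈ C₁, x c = true)) = true ∧ ∀ c ∈ C₂.erase t₁, x c = true) := by
        conv_lhs => rw [← Finset.insert_erase h₁₂]
        rw [Finset.forall_mem_insert, cnot_self,
          ctrl_of_notMem C₁ x (Finset.notMem_erase t₁ C₂)]
      have q2 : (∀ c ∈ C₂, cnot t₂ D x c = true) ↔
          (x t₁ = true ∧ ∀ c ∈ C₂.erase t₁, x c = true) := by
        rw [forall₂_congr fun c hc => by rw [hinner_on c hc]]
        conv_lhs => rw [← Finset.insert_erase h₁₂]
        rw [Finset.forall_mem_insert]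
      have q3 : (∀ c ∈ D, x c = true) ↔
          ((∀ c ∈ C₁, x c = true) ∧ ∀ c ∈ C₂.erase t₁, x c = true) := by
        rw [hDset, Finset.forall_mem_union]
      simp only [q1, q2, q3, Bool.decide_and, Bool.decide_coe]
      generalize decide (∀ c ∈ C₁, x c = true) = A
      generalize decide (∀ c ∈ C₂.erase t₁, x c = true) = B
      cases A <;> cases B <;> cases x t₁ <;> cases x t₂ <;> rfl
    · rw [cnot_ne t₂ C₂ _ hi2, cnot_ne t₁ C₁ _ hi1, cnot_ne t₁ C₁ _ hi1,
        cnot_ne t₂ C₂ _ hi2, cnot_ne t₂ D _ hi2]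
end
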